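/- Let μ > 0 and σ > 0, and let Y be a standard normal random variable. Then the law of R := (μ + σ·Y)/(μ − σ·Y), i.e. the pushforward of the standard Gaussian measure on ℝ under the map y ↦ (μ + σ·y)/(μ − σ·y), is absolutely continuous with respect to Lebesgue measure with density f_R(x) = √(2/π)·(μ/σ)·exp(−(1/2)·((μ/σ)·(x−1)/(x+1))²)/(x+1)², where f_R(−1) := 0. -/

import Mathlib

/-!
With `c = μ/σ` the ratio is the Möbius map `m y = (c + y)/(c - y)`, which maps `ℝ ∖ {c}`
bijectively onto `ℝ ∖ {-1}` with differentiable inverse `g x = c (x - 1)/(x + 1)`,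
`g' x = 2c/(x + 1)²`. Since single points are Lebesgue-null, the one-dimensional change of
variables formula gives the law of `m(Y)` the density `|g'| · (φ ∘ g)`, `φ` the Gaussian density.
-/

open Real MeasureTheory Set

/-- The standard Gaussian measure on `ℝ`, with density `(2π)^(−1/2) exp(−y²/2)`
with respect to Lebesgue measure. -/
noncomputable def stdGaussian : Measure ℝ :=
  volume.withDensity fun y => ENNReal.ofReal ((2 * π) ^ (-(1 / 2) : ℝ) * Real.exp (-y ^ 2 / 2))

theorem map_volume_withDensity_eq_of_leftInvOn {R g g' : ℝ → ℝ} {f : ℝ → ENNReal} {S N : Set ℝ}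
    (hR : Measurable R) (hS : MeasurableSet S) (hSc : volume Sᶜ = 0) (hN : volume N = 0)
    (hRg : LeftInvOn R g S) (hRS : ∀ y ∉ N, R y ∈ S) (hgR : ∀ y ∉ N, g (R y) = y)
    (hg' : ∀ x ∈ S, HasDerivAt g (g' x) x) :
    Measure.map R (volume.withDensity f) =
      volume.withDensity fun x => ENNReal.ofReal |g' x| * f (g x) := by
  ext A hA
  have hpre : R ⁻¹' A \ N = g '' (A ∩ S) \ N := by
    ext y
    constructor
    · rintro ⟨hyA, hyN⟩
      exact ⟨⟨R y, ⟨hyA, hRS y hyN⟩, hgR y hyN⟩, hyN⟩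
    · rintro ⟨⟨x, ⟨hxA, hxS⟩, rfl⟩, hyN⟩
      exact ⟨by rwa [mem_preimage, hRg hxS], hyN⟩
  have hpre_ae : R ⁻¹' A =ᵐ[volume] g '' (A ∩ S) :=
    (sdiff_null_ae_eq_self hN).symm.trans (hpre ▸ sdiff_null_ae_eq_self hN)
  rw [Measure.map_apply hR hA, withDensity_apply _ (hR hA), withDensity_apply _ hA,
    setLIntegral_congr hpre_ae,
    lintegral_image_eq_lintegral_abs_deriv_mul (hA.inter hS)
      (fun x hx => (hg' x hx.2).hasDerivWithinAt) (hRg.injOn.mono inter_subset_right),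
    setLIntegral_congr (inter_ae_eq_left_of_ae_eq_univ (ae_eq_univ.2 hSc))]

theorem add_mul_div_sub_mul_eq {μ σ : ℝ} (hσ : σ ≠ 0) (y : ℝ) :
    (μ + σ * y) / (μ - σ * y) = (μ / σ + y) / (μ / σ - y) := by
  rw [← mul_div_mul_left (μ / σ + y) _ hσ, mul_add, mul_sub, mul_div_cancel₀ _ hσ]

section Mobius

variable {c : ℝ}

theorem leftInvOn_mobius (hc : c ≠ 0) :
    LeftInvOn (fun y => (c + y) / (c - y)) (fun x => c * (x - 1) / (x + 1)) {-1}ᶜ := by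
  intro x hx
  have hx1 : x + 1 ≠ 0 := fun h => hx (by simp; linarith)
  field_simp
  ring

theorem mobius_ne_neg_one (hc : c ≠ 0) {y : ℝ} (hy : y ≠ c) : (c + y) / (c - y) ≠ -1 := by
  rw [ne_eq, div_eq_iff (sub_ne_zero.2 hy.symm)]
  intro h
  exact hc (by linarith)

theorem mobiusInv_mobius (hc : c ≠ 0) {y : ℝ} (hy : y ≠ c) :
    c * ((c + y) / (c - y) - 1) / ((c + y) / (c - y) + 1) = y := by
  have hcy : c - y ≠ 0 := sub_ne_zero.2 hy.symm
  have hsub : (c + y) / (c - y) - 1 = 2 * y / (c - y) := by field_simp; ring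
  have hadd : (c + y) / (c - y) + 1 = 2 * c / (c - y) := by field_simp; ring
  rw [hsub, hadd]
  field_simp

theorem hasDerivAt_mobiusInv (c : ℝ) {x : ℝ} (hx : x ≠ -1) :
    HasDerivAt (fun x => c * (x - 1) / (x + 1)) (2 * c / (x + 1) ^ 2) x := by
  have hx1 : x + 1 ≠ 0 := fun h => hx (by linarith)
  refine ((((hasDerivAt_id' x).sub_const 1).const_mul c).div
    ((hasDerivAt_id' x).add_const 1) hx1).congr_deriv ?_
  ring

end Mobius

theorem two_mul_rpow_two_pi_neg_half : 2 * (2 * π) ^ (-(1 / 2) : ℝ) = √(2 / π) := by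
  rw [rpow_neg (by positivity), ← sqrt_eq_rpow, ← div_eq_mul_inv,
    show (2 / π) = 2 ^ 2 / (2 * π) by ring, sqrt_div' _ (by positivity), sqrt_sq zero_le_two]

theorem quotient_density_perfect_anticorrelation_symmetric
    (μ σ : ℝ) (hμ : 0 < μ) (hσ : 0 < σ) :
    Measure.map (fun y : ℝ => (μ + σ * y) / (μ - σ * y)) stdGaussian =
      volume.withDensity fun x : ℝ => ENNReal.ofReal
        (if x = -1 then 0 else
          Real.sqrt (2 / π) * (μ / σ) *
            Real.exp (-(1 / 2) * ((μ / σ) * (x - 1) / (x + 1)) ^ 2) / (x + 1) ^ 2) := by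
  set c := μ / σ
  have hc : 0 < c := div_pos hμ hσ
  simp_rw [add_mul_div_sub_mul_eq hσ.ne']
  rw [stdGaussian, map_volume_withDensity_eq_of_leftInvOn (by fun_prop)
    (measurableSet_singleton _).compl (by simp) (measure_singleton c) (leftInvOn_mobius hc.ne')
    (fun _ hy => mobius_ne_neg_one hc.ne' hy) (fun _ hy => mobiusInv_mobius hc.ne' hy)
    (fun _ hx => hasDerivAt_mobiusInv c hx)]
  refine withDensity_congr_ae ((volume.ae_ne (-1)).mono fun x hx => ?_)
  have hx1 : x + 1 ≠ 0 := fun h => hx (by linarith)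
  dsimp only
  rw [if_neg hx, ← ENNReal.ofReal_mul (abs_nonneg _), abs_of_pos (by positivity),
    ← two_mul_rpow_two_pi_neg_half]
  congr 1
  field_simp
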